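/- arXiv:2305.14604 — 5 statements merged into one kernel-verified Lean document; each statement's English description precedes it below -/
import Mathlib

section
/- Under the stationary mispricing density p, the second moment satisfies E[z²] = (1 - P_trade)·γ²/3 + P_trade·((γ + σ/√(2λ))² + σ²/(2λ)), where P_trade = 1/(1 + √(2λ)γ/σ). -/
/-!
The density is even: uniform with mass `π₀` on `[-γ, γ]`, exponential with rate `a = η / γ` beyond.
So `E[z²]` is twice the sum of `π₀ γ² / 6` and `πp a ∫_γ^∞ x² e^{-a(x-γ)} dx`, and the latter
integral is `γ²/a + 2γ/a² + 2/a³` by an explicit primitive. As `1 / a = σ / √(2λ)`, what remains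
is algebra.
-/

open MeasureTheory Real

open Filter Topology Set

theorem tendsto_pow_mul_exp_neg_mul_atTop_nhds_zero (n : ℕ) {a : ℝ} (ha : 0 < a) :
    Tendsto (fun x : ℝ => x ^ n * exp (-a * x)) atTop (𝓝 0) := by
  simpa [Real.rpow_natCast] using tendsto_rpow_mul_exp_neg_mul_atTop_nhds_zero n a ha

section ExponentialTail

variable {a : ℝ} (c : ℝ)

theorem hasDerivAt_sq_mul_exp_neg_mul_sub_primitive (ha : a ≠ 0) (x : ℝ) :
    HasDerivAt (fun z => -(exp (-a * (z - c)) * (z ^ 2 / a + 2 * z / a ^ 2 + 2 / a ^ 3)))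
      (x ^ 2 * exp (-a * (x - c))) x := by
  have hexp : HasDerivAt (fun z => exp (-a * (z - c))) (exp (-a * (x - c)) * -a) x := by
    simpa using (((hasDerivAt_id x).sub_const c).const_mul (-a)).exp
  have hpoly : HasDerivAt (fun z => z ^ 2 / a + 2 * z / a ^ 2 + 2 / a ^ 3)
      (2 * x / a + 2 / a ^ 2) x := by
    refine ((((hasDerivAt_pow 2 x).div_const a).add
      (((hasDerivAt_id x).const_mul 2).div_const (a ^ 2))).add_const (2 / a ^ 3)).congr_deriv ?_
    push_cast
    ring
  refine (hexp.mul hpoly).neg.congr_deriv ?_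
  field_simp
  ring

theorem tendsto_sq_mul_exp_neg_mul_sub_primitive_atTop (ha : 0 < a) :
    Tendsto (fun z => -(exp (-a * (z - c)) * (z ^ 2 / a + 2 * z / a ^ 2 + 2 / a ^ 3)))
      atTop (𝓝 0) := by
  have hmoments := ((((tendsto_pow_mul_exp_neg_mul_atTop_nhds_zero 2 ha).div_const a).add
    (((tendsto_pow_mul_exp_neg_mul_atTop_nhds_zero 1 ha).div_const (a ^ 2)).const_mul 2)).add
    (((tendsto_pow_mul_exp_neg_mul_atTop_nhds_zero 0 ha).div_const (a ^ 3)).const_mul 2)).const_mul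
    (-exp (a * c))
  convert hmoments using 1
  · ext z
    rw [show -a * (z - c) = -a * z + a * c by ring, exp_add]
    ring
  · simp

theorem integrableOn_Ioi_sq_mul_exp_neg_mul_sub (ha : 0 < a) :
    IntegrableOn (fun x => x ^ 2 * exp (-a * (x - c))) (Ioi c) :=
  integrableOn_Ioi_deriv_of_nonneg'
    (fun x _ => hasDerivAt_sq_mul_exp_neg_mul_sub_primitive c ha.ne' x)
    (fun x _ => by positivity) (tendsto_sq_mul_exp_neg_mul_sub_primitive_atTop c ha)

theorem integral_Ioi_sq_mul_exp_neg_mul_sub (ha : 0 < a) :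
    ∫ x in Ioi c, x ^ 2 * exp (-a * (x - c)) = c ^ 2 / a + 2 * c / a ^ 2 + 2 / a ^ 3 := by
  rw [integral_Ioi_of_hasDerivAt_of_nonneg'
    (fun x _ => hasDerivAt_sq_mul_exp_neg_mul_sub_primitive c ha.ne' x)
    (fun x _ => by positivity) (tendsto_sq_mul_exp_neg_mul_sub_primitive_atTop c ha)]
  simp

end ExponentialTail

theorem integral_sq_mul_uniform_core_exp_tail {γ a : ℝ} (hγ : 0 ≤ γ) (ha : 0 < a) (u v : ℝ) :
    ∫ z : ℝ, z ^ 2 * (if |z| ≤ γ then u else v * exp (-a * (|z| - γ)))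
      = 2 * (u * γ ^ 3 / 3 + v * (γ ^ 2 / a + 2 * γ / a ^ 2 + 2 / a ^ 3)) := by
  set f : ℝ → ℝ := fun t => t ^ 2 * (if t ≤ γ then u else v * exp (-a * (t - γ)))
  have hcore : EqOn (fun x => u * x ^ 2) f (Ioc 0 γ) := fun x hx => by
    simp only [f, if_pos hx.2]
    ring
  have htail : EqOn (fun x => v * (x ^ 2 * exp (-a * (x - γ)))) f (Ioi γ) := fun x hx => by
    simp only [f, if_neg (not_le.mpr (mem_Ioi.mp hx))]
    ring
  have hcore_int : IntegrableOn f (Ioc 0 γ) :=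
    ((continuous_const.mul (continuous_pow 2)).integrableOn_Ioc).congr_fun hcore measurableSet_Ioc
  have htail_int : IntegrableOn f (Ioi γ) :=
    IntegrableOn.congr_fun ((integrableOn_Ioi_sq_mul_exp_neg_mul_sub γ ha).const_mul v) htail
      measurableSet_Ioi
  have hcore_val : ∫ x in Ioc 0 γ, f x = u * (γ ^ 3 / 3) := by
    rw [← setIntegral_congr_fun measurableSet_Ioc hcore, integral_const_mul,
      ← intervalIntegral.integral_of_le hγ, integral_pow]
    norm_num
  have htail_val : ∫ x in Ioi γ, f x = v * (γ ^ 2 / a + 2 * γ / a ^ 2 + 2 / a ^ 3) := by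
    rw [← setIntegral_congr_fun measurableSet_Ioi htail, integral_const_mul,
      integral_Ioi_sq_mul_exp_neg_mul_sub γ ha]
  calc ∫ z : ℝ, z ^ 2 * (if |z| ≤ γ then u else v * exp (-a * (|z| - γ)))
      = ∫ z : ℝ, f |z| := by simp only [f, sq_abs]
    _ = 2 * ((∫ x in Ioc 0 γ, f x) + ∫ x in Ioi γ, f x) := by
      rw [integral_comp_abs, ← setIntegral_union (Ioc_disjoint_Ioi le_rfl) measurableSet_Ioi
        hcore_int htail_int, Ioc_union_Ioi_eq_Ioi hγ]
    _ = 2 * (u * γ ^ 3 / 3 + v * (γ ^ 2 / a + 2 * γ / a ^ 2 + 2 / a ^ 3)) := by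
      rw [hcore_val, htail_val]
      ring

theorem second_moment_mispricing
    (σ lam γ : ℝ) (hσ : 0 < σ) (hlam : 0 < lam) (hγ : 0 < γ)
    (η : ℝ) (hη : η = Real.sqrt (2 * lam) * γ / σ)
    (Ptrade : ℝ) (hPt : Ptrade = 1 / (1 + η))
    (π₀ : ℝ) (hπ₀ : π₀ = η / (1 + η))
    (πp : ℝ) (hπp : πp = 1 / (2 * (1 + η)))
    (p : ℝ → ℝ)
    (hp : ∀ z, p z = if |z| ≤ γ then π₀ / (2 * γ)
        else πp * (η / γ) * Real.exp (-(η / γ) * (|z| - γ))) :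
    ∫ z : ℝ, z ^ 2 * p z
      = (1 - Ptrade) * γ ^ 2 / 3
        + Ptrade * ((γ + σ / Real.sqrt (2 * lam)) ^ 2 + σ ^ 2 / (2 * lam)) := by
  set s := √(2 * lam) with hs
  have hs_pos : 0 < s := Real.sqrt_pos.mpr (by positivity)
  have hη_pos : 0 < η := by rw [hη]; positivity
  rw [funext hp, integral_sq_mul_uniform_core_exp_tail hγ.le (div_pos hη_pos hγ)]
  rw [hPt, hπ₀, hπp, hη, ← Real.sq_sqrt (show 0 ≤ 2 * lam by positivity), ← hs]
  field_simp
  ring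
end

section
/- For the constant product market maker, the normalized arbitrage profit function for z > γ satisfies A₊(P,z)/V(P) = (1/2)e^{γ/2}(e^{(z-γ)/2} - 2 + e^{-(z-γ)/2}), where A₊(P,z) = P(x*(Pe^{-z}) - x*(Pe^{-γ})) + e^{γ}(y*(Pe^{-z}) - y*(Pe^{-γ})), x*(P) = L/√P, y*(P) = L√P, V(P) = 2L√P. -/
open Real

theorem cpmm_normalized_arb_profit
    (L P γ z : ℝ) (hL : 0 < L) (hP : 0 < P) (hγ : 0 < γ) (hz : γ < z)
    (xs ys V : ℝ → ℝ)
    (hxs : ∀ Q, xs Q = L / Real.sqrt Q)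
    (hys : ∀ Q, ys Q = L * Real.sqrt Q)
    (hV : ∀ Q, V Q = 2 * L * Real.sqrt Q) :
    (P * (xs (P * Real.exp (-z)) - xs (P * Real.exp (-γ)))
      + Real.exp γ * (ys (P * Real.exp (-z)) - ys (P * Real.exp (-γ)))) / V P
    = (1 / 2) * Real.exp (γ / 2)
        * (Real.exp ((z - γ) / 2) - 2 + Real.exp (-(z - γ) / 2)) := by
  have hsP : Real.sqrt P > 0 := Real.sqrt_pos.mpr hP
  have hsq : ∀ t : ℝ, Real.sqrt (P * Real.exp t) = Real.sqrt P * Real.exp (t / 2) := by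
    intro t
    rw [Real.sqrt_mul hP.le,
      show Real.exp t = Real.exp (t/2) * Real.exp (t/2) by rw [← Real.exp_add]; ring_nf,
      Real.sqrt_mul_self (Real.exp_pos _).le]
  have hγ' : Real.exp γ = Real.exp (γ/2) * Real.exp (γ/2) := by rw [← Real.exp_add]; ring_nf
  have h1 : Real.exp (-z/2) = (Real.exp (z/2))⁻¹ := by
    rw [← Real.exp_neg]; ring_nf
  have h2 : Real.exp (-γ/2) = (Real.exp (γ/2))⁻¹ := by
    rw [← Real.exp_neg]; ring_nf
  have h3 : Real.exp ((z-γ)/2) = Real.exp (z/2) * (Real.exp (γ/2))⁻¹ := by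
    rw [← Real.exp_neg, ← Real.exp_add]; ring_nf
  have h4 : Real.exp (-(z-γ)/2) = Real.exp (γ/2) * (Real.exp (z/2))⁻¹ := by
    rw [← Real.exp_neg, ← Real.exp_add]; ring_nf
  have hP2 : Real.sqrt P * Real.sqrt P = P := Real.mul_self_sqrt hP.le
  simp only [hxs, hys, hV, hsq, hγ', h1, h2, h3, h4]
  set s := Real.sqrt P with hs
  rw [← hP2]
  have ea := (Real.exp_pos (γ/2)).ne'
  have eb := (Real.exp_pos (z/2)).ne'
  field_simp
  ring
end

section
/- For the constant product market maker with σ²/8 < λ, the conditional expectation of normalized arbitrage profit over the exponential tail of the stationary distribution equals e^{γ/2}/(8λ/σ² - 1); formally, ∫₀^∞ (1/2)e^{γ/2}(e^{x/2} + e^{-x/2} - 2)·(√(2λ)/σ)e^{-(√(2λ)/σ)x} dx = e^{γ/2}/(8λ/σ² - 1). -/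
open MeasureTheory Real

lemma exp_integral_aux {b : ℝ} (hb : 0 < b) :
    ∫ x in Set.Ioi (0 : ℝ), Real.exp (-b * x) = 1 / b := by
  have := MeasureTheory.integral_comp_mul_left_Ioi (fun x => Real.exp (-x)) 0 hb
  simp only [mul_zero, integral_exp_neg_Ioi_zero, smul_eq_mul, mul_one] at this
  rw [show (fun x => Real.exp (-b * x)) = fun x => Real.exp (-(b * x)) by
    ext x; ring_nf]
  rw [this]; exact (one_div b).symm

lemma exp_integrable_aux {b : ℝ} (hb : 0 < b) :
    IntegrableOn (fun x => Real.exp (-b * x)) (Set.Ioi (0 : ℝ)) := by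
  simpa using exp_neg_integrableOn_Ioi 0 hb

theorem cpmm_conditional_arb_expectation
    (σ lam γ : ℝ) (hσ : 0 < σ) (hγ : 0 < γ) (hlam : σ ^ 2 / 8 < lam)
    (ζ : ℝ) (hζ : ζ = Real.sqrt (2 * lam) / σ) :
    ∫ x in Set.Ioi (0 : ℝ),
        (1 / 2) * Real.exp (γ / 2) * (Real.exp (x / 2) + Real.exp (-x / 2) - 2)
          * (ζ * Real.exp (-ζ * x))
      = Real.exp (γ / 2) / (8 * lam / σ ^ 2 - 1) := by
  have hlam0 : 0 < lam := lt_trans (by positivity) hlam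
  have hζsq : ζ ^ 2 = 2 * lam / σ ^ 2 := by
    rw [hζ, div_pow, sq_sqrt (by positivity)]
  have hζhalf : 1 / 2 < ζ := by
    have h1 : (1/2 : ℝ) ^ 2 < ζ ^ 2 := by
      rw [hζsq, lt_div_iff₀ (by positivity)]
      nlinarith
    have hζ0 : 0 < ζ := by rw [hζ]; positivity
    nlinarith
  have hζ0 : 0 < ζ := lt_trans (by norm_num) hζhalf
  -- decompose integrand
  have hb1 : 0 < ζ - 1/2 := by linarith
  have hb2 : 0 < ζ + 1/2 := by linarith
  have key : ∀ x : ℝ,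
      (1 / 2) * Real.exp (γ / 2) * (Real.exp (x / 2) + Real.exp (-x / 2) - 2)
        * (ζ * Real.exp (-ζ * x))
      = (1/2) * Real.exp (γ/2) * ζ *
          (Real.exp (-(ζ - 1/2) * x) + Real.exp (-(ζ + 1/2) * x)
            - 2 * Real.exp (-ζ * x)) := by
    intro x
    rw [show -(ζ - 1/2) * x = x/2 + -ζ * x by ring,
        show -(ζ + 1/2) * x = -x/2 + -ζ * x by ring,
        Real.exp_add, Real.exp_add]
    ring
  simp only [key]
  rw [MeasureTheory.integral_const_mul]
  have hsub : IntegrableOn (fun x => Real.exp (-(ζ - 1/2) * x) + Real.exp (-(ζ + 1/2) * x))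
      (Set.Ioi (0:ℝ)) := (exp_integrable_aux hb1).add (exp_integrable_aux hb2)
  rw [MeasureTheory.integral_sub hsub ((exp_integrable_aux hζ0).const_mul 2),
      MeasureTheory.integral_add (exp_integrable_aux hb1) (exp_integrable_aux hb2),
      MeasureTheory.integral_const_mul,
      exp_integral_aux hb1, exp_integral_aux hb2, exp_integral_aux hζ0]
  have h8 : 8 * lam / σ ^ 2 - 1 = 4 * ζ^2 - 1 := by
    rw [hζsq]; field_simp; ring
  rw [h8]
  have h4 : (0:ℝ) < 4 * ζ^2 - 1 := by nlinarith
  have n1 : ζ - 1/2 ≠ 0 := ne_of_gt hb1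
  have n2 : ζ + 1/2 ≠ 0 := ne_of_gt hb2
  have n3 : ζ ≠ 0 := ne_of_gt hζ0
  have n4 : 4 * ζ^2 - 1 ≠ 0 := ne_of_gt h4
  have hq : ζ * (1/(ζ - 1/2) + 1/(ζ + 1/2) - 2 * (1/ζ)) = 2/(4*ζ^2 - 1) := by
    rw [mul_one_div, div_add_div _ _ n1 n2, div_sub_div _ _ (mul_ne_zero n1 n2) n3,
        mul_div_assoc', div_eq_div_iff (mul_ne_zero (mul_ne_zero n1 n2) n3) n4]
    ring
  rw [mul_assoc, hq]
  ring
end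

section
/- The instantaneous rate of arbitrage profit for the constant product market maker, normalized by pool value, equals (σ²/8)·P_trade·(e^{γ/2}+e^{-γ/2})/(2(1 - σ²/(8λ))) when λ > σ²/8, where P_trade = 1/(1+√(2λ)γ/σ). Formally: λ·[π₊·e^{γ/2}/(8λ/σ²-1) + π₋·e^{-γ/2}/(8λ/σ²-1)] equals the stated expression, with π₊ = π₋ = P_trade/2. -/
open Real

theorem div_div_sub_one_eq_div_one_sub_div {a b : ℝ} (ha : a ≠ 0) (hb : b ≠ 0) :
    a / (a / b - 1) = b / (1 - b / a) := by
  rw [div_sub_one hb, one_sub_div ha, div_div_eq_mul_div, div_div_eq_mul_div, mul_comm]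

theorem cpmm_arb_rate_general
    (σ lam γ : ℝ) (hσ : 0 < σ) (hlam : σ ^ 2 / 8 < lam)
    (Ptrade : ℝ)
    (πp πm : ℝ) (hπp : πp = Ptrade / 2) (hπm : πm = Ptrade / 2) :
    lam * (πp * Real.exp (γ / 2) / (8 * lam / σ ^ 2 - 1)
            + πm * Real.exp (-γ / 2) / (8 * lam / σ ^ 2 - 1))
      = (σ ^ 2 / 8) * Ptrade
          * ((Real.exp (γ / 2) + Real.exp (-γ / 2))
              / (2 * (1 - σ ^ 2 / (8 * lam)))) := by
  have hlam_pos : 0 < lam := (by positivity : 0 ≤ σ ^ 2 / 8).trans_lt hlam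
  have hswap := div_div_sub_one_eq_div_one_sub_div (a := 8 * lam) (b := σ ^ 2)
    (by positivity) (by positivity)
  subst hπp hπm
  calc lam * (Ptrade / 2 * Real.exp (γ / 2) / (8 * lam / σ ^ 2 - 1)
            + Ptrade / 2 * Real.exp (-γ / 2) / (8 * lam / σ ^ 2 - 1))
      = Ptrade * (Real.exp (γ / 2) + Real.exp (-γ / 2)) / 16
          * (8 * lam / (8 * lam / σ ^ 2 - 1)) := by ring
    _ = _ := by
      rw [hswap]
      -- as an atom, `1 - σ ^ 2 / (8 * lam)` keeps `ring` from expanding the inverse it sits in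
      generalize 1 - σ ^ 2 / (8 * lam) = q; ring

theorem cpmm_arb_rate
    (σ lam γ : ℝ) (hσ : 0 < σ) (hγ : 0 < γ) (hlam : σ ^ 2 / 8 < lam)
    (η : ℝ) (hη : η = Real.sqrt (2 * lam) * γ / σ)
    (Ptrade : ℝ) (hPt : Ptrade = 1 / (1 + η))
    (πp πm : ℝ) (hπp : πp = Ptrade / 2) (hπm : πm = Ptrade / 2) :
    lam * (πp * Real.exp (γ / 2) / (8 * lam / σ ^ 2 - 1)
            + πm * Real.exp (-γ / 2) / (8 * lam / σ ^ 2 - 1))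
      = (σ ^ 2 / 8) * Ptrade
          * ((Real.exp (γ / 2) + Real.exp (-γ / 2))
              / (2 * (1 - σ ^ 2 / (8 * lam)))) :=
  cpmm_arb_rate_general σ lam γ hσ hlam Ptrade πp πm hπp hπm
end

section
/- The stationary density p is invariant under the generator: for every twice continuously differentiable f : ℝ → ℝ with compact support, ∫ℝ [(σ²/2)f''(z) + λ(f(γ)-f(z))1{z>γ} + λ(f(-γ)-f(z))1{z<-γ}] p(z) dz = 0, where p is the piecewise uniform-exponential density from the paper. -/
/-!
Write `D = σ²/2`, `a = η/γ`; the choice of `η` is exactly `D a² = λ`. The density is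
`c = π₀/(2γ)` on `[-γ, γ]` and `c e^{-a(z-γ)}` on the right tail, where `D a² = λ` makes the
weighted generator an exact derivative:
`(D f'' + D a² (f γ - f)) e^{-a(z-γ)} = (D (f' + a (f - f γ)) e^{-a(z-γ)})'`.
So the right tail contributes `-c D f'(γ)`, the left tail (by `z ↦ -z`) contributes
`c D f'(-γ)`, and these cancel the plateau contribution `c D (f'(γ) - f'(-γ))`.
-/

open MeasureTheory Real Set Filter Topology

noncomputable section Tail

variable (D a x₀ : ℝ) {f : ℝ → ℝ}

def tailIntegrand (f : ℝ → ℝ) (z : ℝ) : ℝ :=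
  (D * deriv (deriv f) z + D * a ^ 2 * (f x₀ - f z)) * exp (-a * (z - x₀))

def tailPrimitive (f : ℝ → ℝ) (z : ℝ) : ℝ :=
  D * (deriv f z + a * (f z - f x₀)) * exp (-a * (z - x₀))

lemma hasDerivAt_exp_neg_mul_sub (z : ℝ) :
    HasDerivAt (fun y => exp (-a * (y - x₀))) (-a * exp (-a * (z - x₀))) z := by
  simpa [mul_comm] using (((hasDerivAt_id z).sub_const x₀).const_mul (-a)).exp

lemma tendsto_exp_neg_mul_sub_atTop (ha : 0 < a) :
    Tendsto (fun y => exp (-a * (y - x₀))) atTop (𝓝 0) := by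
  refine tendsto_exp_atBot.comp (Tendsto.const_mul_atTop_of_neg (neg_lt_zero.mpr ha) ?_)
  exact tendsto_atTop_add_const_right _ _ tendsto_id

lemma hasDerivAt_tailPrimitive (hf : ContDiff ℝ 2 f) (z : ℝ) :
    HasDerivAt (tailPrimitive D a x₀ f) (tailIntegrand D a x₀ f z) z := by
  have hf' := (hf.differentiable two_ne_zero z).hasDerivAt
  have hf'' := (hf.differentiable_deriv_two z).hasDerivAt
  unfold tailPrimitive
  refine (((hf''.add ((hf'.sub_const (f x₀)).const_mul a)).const_mul D).mul
    (hasDerivAt_exp_neg_mul_sub a x₀ z)).congr_deriv ?_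
  simp only [tailIntegrand, Pi.add_apply]
  ring

lemma tendsto_tailPrimitive_atTop (ha : 0 < a) (hsupp : HasCompactSupport f) :
    Tendsto (tailPrimitive D a x₀ f) atTop (𝓝 0) := by
  have hcs : HasCompactSupport fun z => D * (deriv f z + a * f z) * exp (-a * (z - x₀)) :=
    ((hsupp.deriv.add hsupp.mul_left).mul_left).mul_right
  have := (hcs.is_zero_at_infty.mono_left atTop_le_cocompact).sub
    ((tendsto_exp_neg_mul_sub_atTop a x₀ ha).const_mul (D * a * f x₀))
  convert this using 2 with z
  · simp only [tailPrimitive]; ring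
  · ring

lemma integrableOn_Ioi_tailIntegrand (ha : 0 < a) (hf : ContDiff ℝ 2 f)
    (hsupp : HasCompactSupport f) : IntegrableOn (tailIntegrand D a x₀ f) (Ioi x₀) := by
  have hcont : Continuous fun z =>
      (D * deriv (deriv f) z - D * a ^ 2 * f z) * exp (-a * (z - x₀)) := by
    fun_prop
  have hcs : HasCompactSupport fun z =>
      (D * deriv (deriv f) z - D * a ^ 2 * f z) * exp (-a * (z - x₀)) :=
    (hsupp.deriv.deriv.mul_left.sub hsupp.mul_left).mul_right
  have hexp : IntegrableOn (fun z => exp (-a * (z - x₀))) (Ioi x₀) := by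
    refine IntegrableOn.congr_fun ((exp_neg_integrableOn_Ioi x₀ ha).const_mul (exp (a * x₀)))
      (fun z _ => ?_) measurableSet_Ioi
    rw [← exp_add]
    ring_nf
  refine ((hcont.integrable_of_hasCompactSupport hcs).integrableOn.add
    (hexp.const_mul (D * a ^ 2 * f x₀))).congr_fun (fun z _ => ?_) measurableSet_Ioi
  simp only [tailIntegrand, Pi.add_apply]
  ring

lemma integral_Ioi_tailIntegrand (ha : 0 < a) (hf : ContDiff ℝ 2 f)
    (hsupp : HasCompactSupport f) :
    ∫ z in Ioi x₀, tailIntegrand D a x₀ f z = -(D * deriv f x₀) := by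
  rw [integral_Ioi_of_hasDerivAt_of_tendsto' (fun z _ => hasDerivAt_tailPrimitive D a x₀ hf z)
    (integrableOn_Ioi_tailIntegrand D a x₀ ha hf hsupp)
    (tendsto_tailPrimitive_atTop D a x₀ ha hsupp)]
  simp [tailPrimitive]

end Tail

noncomputable section Generator

variable (D a γ : ℝ) {f : ℝ → ℝ}

/-- `(𝒜 f) · p / p(0)` when `λ = D a²`: the density is written as `e^{-a (|z| - γ)⁺}`. -/
def generatorIntegrand (f : ℝ → ℝ) (z : ℝ) : ℝ :=
  (D * deriv (deriv f) z + (if γ < z then D * a ^ 2 * (f γ - f z) else 0)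
    + (if z < -γ then D * a ^ 2 * (f (-γ) - f z) else 0)) * exp (-a * max (|z| - γ) 0)

lemma deriv_deriv_comp_neg (f : ℝ → ℝ) (z : ℝ) :
    deriv (deriv fun x => f (-x)) z = deriv (deriv f) (-z) := by
  have h : deriv (fun x => f (-x)) = fun x => -deriv f (-x) := funext (deriv_comp_neg f)
  rw [h, deriv.fun_neg, deriv_comp_neg, neg_neg]

lemma generatorIntegrand_comp_neg (f : ℝ → ℝ) (z : ℝ) :
    generatorIntegrand D a γ (fun x => f (-x)) z = generatorIntegrand D a γ f (-z) := by
  simp only [generatorIntegrand, deriv_deriv_comp_neg, abs_neg, neg_neg, neg_lt_neg_iff,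
    lt_neg (a := γ)]
  ring

lemma generatorIntegrand_eq_tailIntegrand (hγ : 0 ≤ γ) {z : ℝ} (hz : γ < z) :
    generatorIntegrand D a γ f z = tailIntegrand D a γ f z := by
  rw [generatorIntegrand, tailIntegrand, if_pos hz, if_neg (by linarith),
    abs_of_pos (by linarith), max_eq_left (by linarith), add_zero]

lemma generatorIntegrand_of_mem_Icc {z : ℝ} (hz : z ∈ Icc (-γ) γ) :
    generatorIntegrand D a γ f z = D * deriv (deriv f) z := by
  rw [generatorIntegrand, if_neg hz.2.not_gt, if_neg hz.1.not_gt, max_eq_right (by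
    linarith [abs_le.mpr hz]), mul_zero, exp_zero]
  ring

section Tails

variable (ha : 0 < a) (hγ : 0 ≤ γ) (hf : ContDiff ℝ 2 f) (hsupp : HasCompactSupport f)
include ha hγ hf hsupp

lemma integrableOn_Ioi_generatorIntegrand : IntegrableOn (generatorIntegrand D a γ f) (Ioi γ) :=
  (integrableOn_Ioi_tailIntegrand D a γ ha hf hsupp).congr_fun
    (fun _ hz => (generatorIntegrand_eq_tailIntegrand D a γ hγ hz).symm) measurableSet_Ioi

lemma integral_Ioi_generatorIntegrand :
    ∫ z in Ioi γ, generatorIntegrand D a γ f z = -(D * deriv f γ) := by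
  rw [setIntegral_congr_fun measurableSet_Ioi
    (fun _ hz => generatorIntegrand_eq_tailIntegrand D a γ hγ hz),
    integral_Ioi_tailIntegrand D a γ ha hf hsupp]

lemma integrableOn_Iic_generatorIntegrand :
    IntegrableOn (generatorIntegrand D a γ f) (Iic (-γ)) := by
  have := (integrableOn_Ioi_generatorIntegrand D a γ ha hγ (f := fun x => f (-x))
    (hf.comp contDiff_neg) (hsupp.comp_homeomorph (Homeomorph.neg ℝ))).comp_neg
  simp only [generatorIntegrand_comp_neg, neg_neg, neg_Ioi] at this
  exact (integrableOn_Iic_iff_integrableOn_Iio).mpr this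

lemma integral_Iic_generatorIntegrand :
    ∫ z in Iic (-γ), generatorIntegrand D a γ f z = D * deriv f (-γ) := by
  rw [← integral_comp_neg_Ioi]
  simp only [← generatorIntegrand_comp_neg]
  rw [integral_Ioi_generatorIntegrand D a γ ha hγ (f := fun x => f (-x)) (hf.comp contDiff_neg)
    (hsupp.comp_homeomorph (Homeomorph.neg ℝ)), deriv_comp_neg, mul_neg, neg_neg]

end Tails

lemma eqOn_generatorIntegrand_uIcc (hγ : 0 ≤ γ) :
    EqOn (generatorIntegrand D a γ f) (fun z => D * deriv (deriv f) z) (uIcc (-γ) γ) :=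
  fun _ hz => generatorIntegrand_of_mem_Icc D a γ (uIcc_of_le (neg_le_self hγ) ▸ hz)

lemma intervalIntegrable_generatorIntegrand (hγ : 0 ≤ γ) (hf : ContDiff ℝ 2 f) :
    IntervalIntegrable (generatorIntegrand D a γ f) volume (-γ) γ :=
  ((by fun_prop : Continuous fun z => D * deriv (deriv f) z).intervalIntegrable _ _).congr
    ((eqOn_generatorIntegrand_uIcc D a γ hγ).mono uIoc_subset_uIcc).symm

lemma intervalIntegral_generatorIntegrand (hγ : 0 ≤ γ) (hf : ContDiff ℝ 2 f) :
    ∫ z in -γ..γ, generatorIntegrand D a γ f z = D * (deriv f γ - deriv f (-γ)) := by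
  rw [intervalIntegral.integral_congr (eqOn_generatorIntegrand_uIcc D a γ hγ),
    intervalIntegral.integral_const_mul,
    intervalIntegral.integral_deriv_eq_sub (fun z _ => hf.differentiable_deriv_two z)
      ((by fun_prop : Continuous (deriv (deriv f))).intervalIntegrable _ _)]

theorem integral_generatorIntegrand (ha : 0 < a) (hγ : 0 ≤ γ) (hf : ContDiff ℝ 2 f)
    (hsupp : HasCompactSupport f) : ∫ z, generatorIntegrand D a γ f z = 0 := by
  have right_int := integrableOn_Ioi_generatorIntegrand D a γ ha hγ hf hsupp
  have mid_int := intervalIntegrable_generatorIntegrand D a γ hγ hf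
  have left_int := integrableOn_Iic_generatorIntegrand D a γ ha hγ hf hsupp
  rw [← intervalIntegral.integral_Iic_add_Ioi left_int
      (Ioc_union_Ioi_eq_Ioi (neg_le_self hγ) ▸ mid_int.1.union right_int),
    ← intervalIntegral.integral_interval_add_Ioi' mid_int right_int,
    integral_Iic_generatorIntegrand D a γ ha hγ hf hsupp,
    intervalIntegral_generatorIntegrand D a γ hγ hf,
    integral_Ioi_generatorIntegrand D a γ ha hγ hf hsupp]
  ring

end Generator

theorem stationary_generator_identity
    (σ lam γ : ℝ) (hσ : 0 < σ) (hlam : 0 < lam) (hγ : 0 < γ)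
    (η : ℝ) (hη : η = Real.sqrt (2 * lam) * γ / σ)
    (π₀ : ℝ) (hπ₀ : π₀ = η / (1 + η))
    (πp : ℝ) (hπp : πp = 1 / (2 * (1 + η)))
    (p : ℝ → ℝ)
    (hp : ∀ z, p z = if |z| ≤ γ then π₀ / (2 * γ)
        else πp * (η / γ) * Real.exp (-(η / γ) * (|z| - γ)))
    (f : ℝ → ℝ) (hf : ContDiff ℝ 2 f) (hsupp : HasCompactSupport f) :
    ∫ z : ℝ,
        ((σ ^ 2 / 2) * deriv (deriv f) z
          + (if γ < z then lam * (f γ - f z) else 0)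
          + (if z < -γ then lam * (f (-γ) - f z) else 0)) * p z = 0 := by
  have hη_pos : 0 < η := hη ▸ by positivity
  have hlam_eq : lam = σ ^ 2 / 2 * (η / γ) ^ 2 := by
    rw [hη, div_pow, div_pow, mul_pow, sq_sqrt (by positivity)]
    field_simp
  have hp_eq : ∀ z, p z = π₀ / (2 * γ) * exp (-(η / γ) * max (|z| - γ) 0) := fun z => by
    rw [hp z]
    split_ifs with hz
    · rw [max_eq_right (by linarith), mul_zero, exp_zero, mul_one]
    · rw [max_eq_left (by linarith), hπ₀, hπp]
      field_simp
  calc _ = ∫ z, π₀ / (2 * γ) * generatorIntegrand (σ ^ 2 / 2) (η / γ) γ f z := by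
        congr 1 with z
        rw [generatorIntegrand, hp_eq, hlam_eq]
        ring
    _ = 0 := by
      rw [integral_const_mul, integral_generatorIntegrand _ _ _ (by positivity) hγ.le hf hsupp,
        mul_zero]
end
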